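/- Let (X,B,μ,(T_1,…,T_l)) be a freely generated totally ergodic system and let p_1,…,p_l : ℤ^d → ℤ be nonconstant linear functions. Then there exists a constant C such that for any f ∈ L^∞(μ) and any Følner sequence {Φ_N} in ℤ^d, lim_{N→∞} ‖(1/|Φ_N|) Σ_{u∈Φ_N} T_1^{p_1(u)}⋯T_l^{p_l(u)} f‖_{L²(μ)} ≤ C ⦀f⦀₂, where ⦀·⦀₂ is the Host–Kra seminorm of order 2 (computed with respect to any of the ergodic transformations T_1^{c_1}⋯T_l^{c_l}, on which it does not depend). -/

import Mathlib

open MeasureTheory Filter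

/-- A Følner sequence of finite subsets of an additive group: translates of `Φ N`
asymptotically almost coincide with `Φ N`. -/
def IsFolner {G : Type*} [AddCommGroup G] [DecidableEq G] (Φ : ℕ → Finset G) : Prop :=
  (∀ N, (Φ N).Nonempty) ∧
  ∀ g : G, Filter.Tendsto
    (fun N => (((((Φ N).image (fun x => g + x)) \ Φ N) ∪
        (Φ N \ ((Φ N).image (fun x => g + x)))).card : ℝ) / (Φ N).card)
    Filter.atTop (nhds 0)

/-- The `k`-th cube space `X^{2^k}`, realized as an iterated product. -/
def Cube (X : Type*) : ℕ → Type _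
  | 0 => X
  | k + 1 => Cube X k × Cube X k

def cubeMeasurableSpace {X : Type*} [m : MeasurableSpace X] :
    ∀ k, MeasurableSpace (Cube X k)
  | 0 => m
  | k + 1 => @Prod.instMeasurableSpace _ _ (cubeMeasurableSpace k) (cubeMeasurableSpace k)

instance instCubeMS {X : Type*} [MeasurableSpace X] (k : ℕ) : MeasurableSpace (Cube X k) :=
  cubeMeasurableSpace k

/-- The diagonal self-map `T^{[k]} = T × ⋯ × T` of the cube space. -/
def cubeMap {X : Type*} (T : X → X) : ∀ k, Cube X k → Cube X k
  | 0 => T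
  | k + 1 => fun p => (cubeMap T k p.1, cubeMap T k p.2)

/-- The tensor power `f ⊗ ⋯ ⊗ f` (`2^k` times) of a function on the cube space. -/
def cubeFun {X : Type*} (f : X → ℝ) : ∀ k, Cube X k → ℝ
  | 0 => f
  | k + 1 => fun p => cubeFun f k p.1 * cubeFun f k p.2

/-- `ν` is the sequence of Host–Kra cube measures `μ^{[k]}_T`: `ν 0 = μ` and `ν (k+1)`
is the relatively independent square of `ν k` over the σ-algebra of
`T^{[k]}`-invariant sets. -/
def IsHKSeq {X : Type*} [MeasurableSpace X] (μ : Measure X) (T : X → X)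
    (ν : ∀ k, Measure (Cube X k)) : Prop :=
  ν 0 = μ ∧
  ∀ k, IsProbabilityMeasure (ν k) ∧
    ∀ F G : Cube X k → ℝ, Measurable F → Measurable G →
      (∃ C, ∀ x, |F x| ≤ C) → (∃ C, ∀ x, |G x| ≤ C) →
      ∫ (p : Cube X k × Cube X k), F p.1 * G p.2 ∂(ν (k + 1)) =
        ∫ x, (MeasureTheory.condExp (MeasurableSpace.invariants (cubeMap T k)) (ν k) F x) *
          (MeasureTheory.condExp (MeasurableSpace.invariants (cubeMap T k)) (ν k) G x) ∂(ν k)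

/-- The Host–Kra seminorm `⦀f⦀_{k,T}`, computed from a sequence `ν` of cube measures:
`⦀f⦀_{k}^{2^k} = ∫ ∏_{j} f(x_j) dν k`. -/
noncomputable def hkSeminorm {X : Type*} [MeasurableSpace X]
    (ν : ∀ k, Measure (Cube X k)) (k : ℕ) (f : X → ℝ) : ℝ :=
  (∫ x, cubeFun f k x ∂(ν k)) ^ ((1 : ℝ) / 2 ^ k)

/-- An ED-set of polynomial maps `ℤ^d → ℤ`, presented as an `r × l` matrix of functions:
none is a nonzero constant, no two (distinct) entries differ by a nonzero constant,
no row is identically zero, and no two rows are identical. -/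
def IsEDSet {r l d : ℕ} (p : Fin r → Fin l → (Fin d → ℤ) → ℤ) : Prop :=
  (∀ i j, ¬∃ c : ℤ, c ≠ 0 ∧ ∀ u, p i j u = c) ∧
  (∀ i₁ j₁ i₂ j₂, (i₁, j₁) ≠ (i₂, j₂) →
    ¬∃ c : ℤ, c ≠ 0 ∧ ∀ u, p i₁ j₁ u - p i₂ j₂ u = c) ∧
  (∀ i, ∃ j, p i j ≠ 0) ∧
  (∀ i₁ i₂, i₁ ≠ i₂ → ∃ j, p i₁ j ≠ p i₂ j)

/-!
The constant is `C = 1`. Choose `j, t` with `a j t ≠ 0`; by total ergodicity the transformation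
`T_{e_t} = ∏ T_j ^ a j t` of the `ℤ^d`-action `u ↦ ∏ T_j ^ p_j(u)` is ergodic. Its Koopman
operator is an isometry of `L²`, so every vector orthogonal to the coboundaries
`g - g ∘ T_{e_t}` is invariant, hence constant; thus `f - ∫ f` is an `L²`-limit of coboundaries.
Følner averages of a coboundary are bounded by the Følner defect times `‖g‖₂` and tend to `0`,
so the averages of `f` are asymptotically bounded by `|∫ f|`. Finally `|∫ f| ≤ ⦀f⦀_k` for
`k ≥ 1`: since `μ^{[k+1]}` is the relatively independent square of `μ^{[k]}`,
`∫ F ⊗ F dμ^{[k+1]} = ∫ E(F | I)² dμ^{[k]} ≥ (∫ F dμ^{[k]})²`.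
-/

open scoped ENNReal Topology

section Algebra

def measurePreservingPerms {X : Type*} [MeasurableSpace X] (μ : Measure X) :
    Subgroup (Equiv.Perm X) where
  carrier := {σ | MeasurePreserving σ μ μ ∧ MeasurePreserving ⇑σ⁻¹ μ μ}
  mul_mem' := fun ⟨hσ, hσ'⟩ ⟨hτ, hτ'⟩ => ⟨hσ.comp hτ, by simpa using hτ'.comp hσ'⟩
  one_mem' := ⟨MeasurePreserving.id μ, MeasurePreserving.id μ⟩
  inv_mem' := fun ⟨hσ, hσ'⟩ => ⟨hσ', by simpa using hσ⟩

variable {G : Type*} [Group G] {l : ℕ}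

def zpowProd (T : Fin l → G) (n : Fin l → ℤ) : G :=
  (List.ofFn fun j => T j ^ n j).prod

theorem zpowProd_mem {H : Subgroup G} {T : Fin l → G} (hT : ∀ j, T j ∈ H) (n : Fin l → ℤ) :
    zpowProd T n ∈ H :=
  H.list_prod_mem <| by simpa using fun j => H.zpow_mem (hT j) (n j)

theorem zpowProd_add {T : Fin l → G} (hT : ∀ i j, Commute (T i) (T j)) (m n : Fin l → ℤ) :
    zpowProd T (m + n) = zpowProd T m * zpowProd T n := by
  induction l with
  | zero => simp [zpowProd]
  | succ l ih =>
    have hhead : Commute (T 0 ^ n 0) (List.ofFn fun j : Fin l => T j.succ ^ m j.succ).prod :=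
      Commute.list_prod_right _ _ <| by
        simpa using fun j : Fin l => (hT 0 j.succ).zpow_zpow _ _
    simp only [zpowProd, List.ofFn_succ, List.prod_cons, Pi.add_apply, zpow_add] at ih ⊢
    rw [ih (fun i j => hT i.succ j.succ) (fun j => m j.succ) (fun j => n j.succ)]
    rw [mul_assoc, ← mul_assoc (T 0 ^ n 0), hhead.eq]
    group

end Algebra

section Folner

variable {X G : Type*} {S : G → X → X}

noncomputable def folnerAverage (S : G → X → X) (s : Finset G) (f : X → ℝ) (x : X) : ℝ :=
  (s.card : ℝ)⁻¹ * ∑ u ∈ s, f (S u x)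

noncomputable def folnerDefect [AddCommGroup G] [DecidableEq G] (s : Finset G) (g : G) : ℝ :=
  ((((s.image fun x => g + x) \ s) ∪ (s \ s.image fun x => g + x)).card : ℝ) / s.card

theorem folnerAverage_coboundary [AddCommGroup G] [DecidableEq G]
    (hS : ∀ u v x, S (u + v) x = S u (S v x)) (s : Finset G) (g : X → ℝ) (e : G) (x : X) :
    folnerAverage S s (fun y => g y - g (S e y)) x = (s.card : ℝ)⁻¹ *
      (∑ u ∈ s \ s.image (e + ·), g (S u x) - ∑ u ∈ s.image (e + ·) \ s, g (S u x)) := by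
  have htranslate : ∑ u ∈ s, g (S e (S u x)) = ∑ u ∈ s.image (e + ·), g (S u x) := by
    rw [Finset.sum_image fun _ _ _ _ h => add_left_cancel h]
    simp only [hS]
  rw [folnerAverage, Finset.sum_sub_distrib, htranslate, Finset.sum_sdiff_sub_sum_sdiff]

theorem folnerAverage_add_const_add {s : Finset G} (hs : s.Nonempty) (r g : X → ℝ) (c : ℝ) :
    folnerAverage S s (fun x => r x + c + g x) =
      folnerAverage S s r + (fun _ => c) + folnerAverage S s g := by
  ext x
  have hcard : (s.card : ℝ) ≠ 0 := by simpa using hs.ne_empty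
  simp only [folnerAverage, Finset.sum_add_distrib, Finset.sum_const, nsmul_eq_mul, Pi.add_apply]
  field_simp

variable [MeasurableSpace X] {μ : Measure X} {p : ℝ≥0∞}

theorem aestronglyMeasurable_sum_comp (hS : ∀ u, MeasurePreserving (S u) μ μ) {f : X → ℝ}
    (hf : AEStronglyMeasurable f μ) (t : Finset G) :
    AEStronglyMeasurable (fun x => ∑ u ∈ t, f (S u x)) μ :=
  Finset.aestronglyMeasurable_fun_sum _ fun u _ =>
    hf.comp_quasiMeasurePreserving (hS u).quasiMeasurePreserving

theorem aestronglyMeasurable_folnerAverage (hS : ∀ u, MeasurePreserving (S u) μ μ)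
    {f : X → ℝ} (hf : AEStronglyMeasurable f μ) (s : Finset G) :
    AEStronglyMeasurable (folnerAverage S s f) μ :=
  (aestronglyMeasurable_sum_comp hS hf s).const_mul _

theorem eLpNorm_sum_comp_le (hS : ∀ u, MeasurePreserving (S u) μ μ) {f : X → ℝ}
    (hf : AEStronglyMeasurable f μ) (hp : 1 ≤ p) (t : Finset G) :
    eLpNorm (fun x => ∑ u ∈ t, f (S u x)) p μ ≤ t.card * eLpNorm f p μ := by
  have hsum : (fun x => ∑ u ∈ t, f (S u x)) = ∑ u ∈ t, f ∘ S u := by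
    ext x
    simp [Finset.sum_apply]
  calc eLpNorm (fun x => ∑ u ∈ t, f (S u x)) p μ
      ≤ ∑ u ∈ t, eLpNorm (f ∘ S u) p μ := hsum ▸ eLpNorm_sum_le
          (fun u _ => hf.comp_quasiMeasurePreserving (hS u).quasiMeasurePreserving) hp
    _ = t.card * eLpNorm f p μ := by
        simp [eLpNorm_comp_measurePreserving hf (hS _)]

theorem eLpNorm_const_mul_sum_comp_le (hS : ∀ u, MeasurePreserving (S u) μ μ) {f : X → ℝ}
    (hf : AEStronglyMeasurable f μ) (hp : 1 ≤ p) (t : Finset G) (r : ℝ) :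
    eLpNorm (fun x => r * ∑ u ∈ t, f (S u x)) p μ ≤
      ENNReal.ofReal (|r| * t.card) * eLpNorm f p μ := by
  rw [show (fun x => r * ∑ u ∈ t, f (S u x)) = r • fun x => ∑ u ∈ t, f (S u x) from rfl,
    eLpNorm_const_smul, ENNReal.ofReal_mul (abs_nonneg r), ← Real.enorm_eq_ofReal_abs,
    ENNReal.ofReal_natCast, mul_assoc]
  gcongr
  exact eLpNorm_sum_comp_le hS hf hp t

theorem eLpNorm_folnerAverage_le (hS : ∀ u, MeasurePreserving (S u) μ μ) {f : X → ℝ}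
    (hf : AEStronglyMeasurable f μ) (hp : 1 ≤ p) (s : Finset G) :
    eLpNorm (folnerAverage S s f) p μ ≤ eLpNorm f p μ := by
  refine (eLpNorm_const_mul_sum_comp_le hS hf hp s _).trans ?_
  rcases s.eq_empty_or_nonempty with rfl | hs
  · simp
  · rw [abs_of_nonneg (by positivity), inv_mul_cancel₀ (by simpa using hs.ne_empty)]
    simp

theorem eLpNorm_folnerAverage_add_const_add_le [IsProbabilityMeasure μ]
    (hS : ∀ u, MeasurePreserving (S u) μ μ) {s : Finset G} (hs : s.Nonempty) {r h : X → ℝ}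
    (hr : AEStronglyMeasurable r μ) (hh : AEStronglyMeasurable h μ) (hp : 1 ≤ p) (c : ℝ) :
    eLpNorm (folnerAverage S s fun x => r x + c + h x) p μ ≤
      eLpNorm r p μ + ‖c‖ₑ + eLpNorm (folnerAverage S s h) p μ := by
  rw [folnerAverage_add_const_add hs]
  have hconst : eLpNorm (fun _ : X => c) p μ = ‖c‖ₑ := by
    simp [eLpNorm_const c (zero_lt_one.trans_le hp).ne' (IsProbabilityMeasure.ne_zero μ)]
  calc eLpNorm (folnerAverage S s r + (fun _ => c) + folnerAverage S s h) p μ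
      ≤ eLpNorm (folnerAverage S s r) p μ + eLpNorm (fun _ : X => c) p μ +
          eLpNorm (folnerAverage S s h) p μ :=
        (eLpNorm_add_le ((aestronglyMeasurable_folnerAverage hS hr s).add
          aestronglyMeasurable_const) (aestronglyMeasurable_folnerAverage hS hh s) hp).trans
          (add_le_add_left (eLpNorm_add_le (aestronglyMeasurable_folnerAverage hS hr s)
            aestronglyMeasurable_const hp) _)
    _ ≤ eLpNorm r p μ + ‖c‖ₑ + eLpNorm (folnerAverage S s h) p μ := by
        rw [hconst]
        gcongr
        exact eLpNorm_folnerAverage_le hS hr hp s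

variable [AddCommGroup G] [DecidableEq G]

theorem eLpNorm_folnerAverage_coboundary_le (hS : ∀ u, MeasurePreserving (S u) μ μ)
    (hSadd : ∀ u v x, S (u + v) x = S u (S v x)) {g : X → ℝ} (hg : AEStronglyMeasurable g μ)
    (hp : 1 ≤ p) (s : Finset G) (e : G) :
    eLpNorm (folnerAverage S s fun y => g y - g (S e y)) p μ ≤
      ENNReal.ofReal (folnerDefect s e) * eLpNorm g p μ := by
  set r : ℝ := (s.card : ℝ)⁻¹
  have hr : 0 ≤ r := by positivity
  calc eLpNorm (folnerAverage S s fun y => g y - g (S e y)) p μ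
      = eLpNorm ((fun x => r * ∑ u ∈ s \ s.image (e + ·), g (S u x)) -
          fun x => r * ∑ u ∈ s.image (e + ·) \ s, g (S u x)) p μ := by
        congr 1
        ext x
        simp [folnerAverage_coboundary hSadd, mul_sub, r]
    _ ≤ ENNReal.ofReal (r * (s \ s.image (e + ·)).card) * eLpNorm g p μ +
          ENNReal.ofReal (r * (s.image (e + ·) \ s).card) * eLpNorm g p μ := by
        refine (eLpNorm_sub_le ((aestronglyMeasurable_sum_comp hS hg _).const_mul _)
          ((aestronglyMeasurable_sum_comp hS hg _).const_mul _) hp).trans ?_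
        gcongr <;> simpa only [abs_of_nonneg hr] using eLpNorm_const_mul_sum_comp_le hS hg hp _ r
    _ = ENNReal.ofReal (folnerDefect s e) * eLpNorm g p μ := by
        rw [← add_mul, ← ENNReal.ofReal_add (by positivity) (by positivity), folnerDefect,
          Finset.card_union_of_disjoint disjoint_sdiff_sdiff]
        congr 2
        push_cast
        ring

theorem tendsto_eLpNorm_folnerAverage_coboundary (hS : ∀ u, MeasurePreserving (S u) μ μ)
    (hSadd : ∀ u v x, S (u + v) x = S u (S v x)) {g : X → ℝ} (hg : MemLp g p μ) (hp : 1 ≤ p)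
    {Φ : ℕ → Finset G} (hΦ : IsFolner Φ) (e : G) :
    Tendsto (fun N => eLpNorm (folnerAverage S (Φ N) fun y => g y - g (S e y)) p μ) atTop
      (𝓝 0) := by
  have hdefect : Tendsto (fun N => ENNReal.ofReal (folnerDefect (Φ N) e) * eLpNorm g p μ) atTop
      (𝓝 0) := by
    simpa only [folnerDefect, ENNReal.ofReal_zero, zero_mul] using
      ENNReal.Tendsto.mul_const (ENNReal.tendsto_ofReal (hΦ.2 e)) (Or.inr hg.eLpNorm_ne_top)
  exact tendsto_of_tendsto_of_tendsto_of_le_of_le tendsto_const_nhds hdefect (fun _ => bot_le)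
    fun N => eLpNorm_folnerAverage_coboundary_le hS hSadd hg.1 hp (Φ N) e

end Folner

theorem LinearIsometry.mem_topologicalClosure_range_id_sub {𝕜 E : Type*} [RCLike 𝕜]
    [NormedAddCommGroup E] [InnerProductSpace 𝕜 E] [CompleteSpace E] (U : E →ₗᵢ[𝕜] E) {y : E}
    (hy : ∀ h, U h = h → inner 𝕜 h y = 0) :
    y ∈ (LinearMap.range (LinearMap.id - U.toLinearMap)).topologicalClosure := by
  rw [← Submodule.orthogonal_orthogonal_eq_closure, Submodule.mem_orthogonal]
  refine fun h hh => hy h ?_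
  have hinner : inner 𝕜 (U h) h = inner 𝕜 h h := by
    have := (Submodule.mem_orthogonal _ _).mp hh (h - U h) ⟨h, rfl⟩
    rwa [inner_sub_left, sub_eq_zero, eq_comm] at this
  exact eq_of_norm_le_re_inner_eq_norm_sq (U.norm_map h).le (by rw [hinner, inner_self_eq_norm_sq])

section Ergodic

variable {X : Type*} [MeasurableSpace X] {μ : Measure X} {T : X → X}

theorem Ergodic.ae_eq_const_of_compMeasurePreserving_eq (hT : Ergodic T μ) {h : Lp ℝ 2 μ}
    (hh : Lp.compMeasurePreserving T hT.toMeasurePreserving h = h) :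
    ∃ k : ℝ, (h : X → ℝ) =ᵐ[μ] fun _ => k := by
  refine hT.ae_eq_const_of_ae_eq_comp₀ (Lp.aestronglyMeasurable h).aemeasurable.nullMeasurable ?_
  calc (h : X → ℝ) ∘ T
      =ᵐ[μ] Lp.compMeasurePreserving T hT.toMeasurePreserving h :=
        (Lp.coeFn_compMeasurePreserving h _).symm
    _ = h := by rw [hh]

theorem Ergodic.exists_eLpNorm_sub_coboundary_lt [IsProbabilityMeasure μ] (hT : Ergodic T μ)
    {f : X → ℝ} (hf : MemLp f 2 μ) {ε : ℝ} (hε : 0 < ε) :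
    ∃ g : X → ℝ, MemLp g 2 μ ∧
      eLpNorm (fun x => f x - ∫ y, f y ∂μ - (g x - g (T x))) 2 μ < ENNReal.ofReal ε := by
  set c := ∫ y, f y ∂μ
  set U := Lp.compMeasurePreservingₗᵢ (E := ℝ) (p := 2) ℝ T hT.toMeasurePreserving
  set y : Lp ℝ 2 μ := hf.toLp f - Lp.const 2 μ c
  have hy_coe : (y : X → ℝ) =ᵐ[μ] fun x => f x - c := by
    filter_upwards [Lp.coeFn_sub (hf.toLp f) (Lp.const 2 μ c), hf.coeFn_toLp,
      Lp.coeFn_const 2 μ c] with x hsub hf' hc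
    rw [hsub, Pi.sub_apply, hf', hc, Function.const_apply]
  have hy : y ∈ (LinearMap.range (LinearMap.id - U.toLinearMap)).topologicalClosure := by
    refine U.mem_topologicalClosure_range_id_sub fun h hh => ?_
    obtain ⟨k, hk⟩ := hT.ae_eq_const_of_compMeasurePreserving_eq hh
    have hfi : Integrable f μ := hf.integrable one_le_two
    rw [L2.inner_def, integral_congr_ae (g := fun x => k * (f x - c))]
    · simp [integral_const_mul, integral_sub hfi (integrable_const c), c]
    · filter_upwards [hk, hy_coe] with x hkx hyx
      simp [hkx, hyx, mul_comm]
  obtain ⟨w, ⟨g, rfl⟩, hdist⟩ := Metric.mem_closure_iff.mp hy ε hε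
  refine ⟨g, Lp.memLp g, ?_⟩
  have hcoe : (fun x => f x - c - (g x - g (T x))) =ᵐ[μ] ⇑(y - (g - U g)) := by
    filter_upwards [hy_coe, Lp.coeFn_sub y (g - U g), Lp.coeFn_sub g (U g),
      Lp.coeFn_compMeasurePreserving g hT.toMeasurePreserving] with x hyx hsub hsub' hUg
    rw [hsub, Pi.sub_apply, hsub', Pi.sub_apply, hyx]
    exact congrArg _ (congrArg _ hUg.symm)
  rw [eLpNorm_congr_ae hcoe, ← Lp.enorm_def, ← ofReal_norm, ← dist_eq_norm]
  exact (ENNReal.ofReal_lt_ofReal_iff hε).mpr (by simpa using hdist)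

end Ergodic

section MeanErgodic

variable {X G : Type*} [MeasurableSpace X] {μ : Measure X} [AddCommGroup G] [DecidableEq G]
  {S : G → X → X}

theorem limsup_eLpNorm_folnerAverage_le [IsProbabilityMeasure μ]
    (hS : ∀ u, MeasurePreserving (S u) μ μ) (hSadd : ∀ u v x, S (u + v) x = S u (S v x))
    {e : G} (he : Ergodic (S e) μ) {f : X → ℝ} (hf : MemLp f 2 μ) {Φ : ℕ → Finset G}
    (hΦ : IsFolner Φ) :
    limsup (fun N => (eLpNorm (folnerAverage S (Φ N) f) 2 μ).toReal) atTop ≤ |∫ x, f x ∂μ| := by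
  set c := ∫ x, f x ∂μ
  refine le_of_forall_pos_le_add fun ε hε => ?_
  obtain ⟨g, hg, hfg⟩ := he.exists_eLpNorm_sub_coboundary_lt hf (half_pos hε)
  set r : X → ℝ := fun x => f x - c - (g x - g (S e x))
  have hf_eq : f = fun x => r x + c + (g x - g (S e x)) := by
    ext x
    simp only [r]
    ring
  have hcob_memLp : MemLp (fun x => g x - g (S e x)) 2 μ :=
    hg.sub (hg.comp_measurePreserving (hS e))
  have hr : MemLp r 2 μ := (hf.sub (memLp_const c)).sub hcob_memLp
  have hcob := (tendsto_order.1 (tendsto_eLpNorm_folnerAverage_coboundary hS hSadd hg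
    one_le_two hΦ e)).2 _ (ENNReal.ofReal_pos.2 (half_pos hε))
  refine limsup_le_of_le (isCoboundedUnder_le_of_le atTop fun _ => ENNReal.toReal_nonneg) ?_
  filter_upwards [hcob] with N hN
  refine ENNReal.toReal_le_of_le_ofReal (by positivity) ?_
  calc eLpNorm (folnerAverage S (Φ N) f) 2 μ
      ≤ eLpNorm r 2 μ + ‖c‖ₑ + eLpNorm (folnerAverage S (Φ N) fun y => g y - g (S e y)) 2 μ := by
        rw [hf_eq]
        exact eLpNorm_folnerAverage_add_const_add_le hS (hΦ.1 N) hr.1 hcob_memLp.1 one_le_two c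
    _ ≤ ENNReal.ofReal (ε / 2) + ENNReal.ofReal |c| + ENNReal.ofReal (ε / 2) := by
        rw [Real.enorm_eq_ofReal_abs]
        gcongr
    _ = ENNReal.ofReal (|c| + ε) := by
        rw [← ENNReal.ofReal_add (by positivity) (by positivity),
          ← ENNReal.ofReal_add (by positivity) (by positivity)]
        ring_nf

end MeanErgodic

theorem MeasureTheory.MeasurePreserving.of_integral_comp_eq {α β : Type*} [MeasurableSpace α]
    [MeasurableSpace β] {μa : Measure α} {μb : Measure β} [IsFiniteMeasure μa]
    [IsFiniteMeasure μb] {φ : α → β} (hφ : Measurable φ)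
    (h : ∀ F : β → ℝ, Measurable F → (∃ C, ∀ y, |F y| ≤ C) → ∫ x, F (φ x) ∂μa = ∫ y, F y ∂μb) :
    MeasurePreserving φ μa μb := by
  refine ⟨hφ, Measure.ext fun B hB => ?_⟩
  have hind : ∫ x, (φ ⁻¹' B).indicator 1 x ∂μa = ∫ y, B.indicator 1 y ∂μb :=
    h (B.indicator 1) (measurable_one.indicator hB)
      ⟨1, fun y => by by_cases hy : y ∈ B <;> simp [hy]⟩
  rw [integral_indicator_one hB, integral_indicator_one (hφ hB)] at hind
  rw [Measure.map_apply hφ hB]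
  exact (ENNReal.toReal_eq_toReal_iff' (measure_ne_top _ _) (measure_ne_top _ _)).mp hind

theorem sq_integral_le_integral_condExp_mul_self {Y : Type*} {m m₀ : MeasurableSpace Y}
    {ρ : Measure Y} [IsProbabilityMeasure ρ] (hm : m ≤ m₀) {F : Y → ℝ} (hF : MemLp F 2 ρ) :
    (∫ y, F y ∂ρ) ^ 2 ≤ ∫ y, ρ[F|m] y * ρ[F|m] y ∂ρ := by
  have hvar := ProbabilityTheory.variance_nonneg (ρ[F|m]) ρ
  rw [ProbabilityTheory.variance_eq_sub (hF.condExp one_le_two), integral_condExp hm] at hvar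
  simpa [sq] using hvar

theorem MeasureTheory.MemLp.exists_measurable_bounded_ae_eq {α : Type*} [MeasurableSpace α]
    {μ : Measure α} {f : α → ℝ} (hf : MemLp f ⊤ μ) :
    ∃ g : α → ℝ, Measurable g ∧ (∃ R, ∀ x, |g x| ≤ R) ∧ f =ᵐ[μ] g := by
  obtain ⟨R, hR⟩ := eLpNormEssSup_lt_top_iff_isBoundedUnder.mp
    (by simpa [eLpNorm_exponent_top] using hf.2)
  refine ⟨fun x => max (-R) (min (hf.1.mk f x) R),
    measurable_const.max (hf.1.stronglyMeasurable_mk.measurable.min measurable_const),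
    ⟨R, fun x => abs_le.2 ⟨le_max_left _ _, max_le (by simp) (min_le_right _ _)⟩⟩, ?_⟩
  filter_upwards [hf.1.ae_eq_mk, hR] with x hmk hx
  have hx : |f x| ≤ R := by rw [← Real.norm_eq_abs, ← coe_nnnorm]; exact_mod_cast hx
  rw [← hmk, min_eq_left (abs_le.1 hx).2, max_eq_right (abs_le.1 hx).1]

section Cube

variable {X : Type*}

theorem abs_cubeFun_le {f : X → ℝ} {R : ℝ} (hf : ∀ x, |f x| ≤ R) :
    ∀ k x, |cubeFun f k x| ≤ R ^ 2 ^ k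
  | 0, x => (hf x).trans_eq (pow_one R).symm
  | k + 1, x => by
    rw [cubeFun, abs_mul, pow_succ, pow_mul, sq]
    exact mul_le_mul (abs_cubeFun_le hf k _) (abs_cubeFun_le hf k _) (abs_nonneg _)
      ((abs_nonneg _).trans (abs_cubeFun_le hf k x.1))

variable [MeasurableSpace X]

theorem measurable_cubeFun {f : X → ℝ} (hf : Measurable f) : ∀ k, Measurable (cubeFun f k)
  | 0 => hf
  | k + 1 => ((measurable_cubeFun hf k).comp measurable_fst).mul
      ((measurable_cubeFun hf k).comp measurable_snd)

variable {μ : Measure X} {T : X → X} {ν : ∀ k, Measure (Cube X k)}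

theorem IsHKSeq.measurePreserving_fst (hν : IsHKSeq μ T ν) (k : ℕ) :
    MeasurePreserving Prod.fst (ν (k + 1)) (ν k) := by
  have hm := MeasurableSpace.invariants_le (cubeMap T k)
  have := (hν.2 k).1
  have := (hν.2 (k + 1)).1
  refine MeasurePreserving.of_integral_comp_eq (μa := ν (k + 1)) measurable_fst fun F hF hFb => ?_
  have h := (hν.2 k).2 F (fun _ => 1) hF measurable_const hFb ⟨1, by simp⟩
  simp only [condExp_const hm, mul_one, integral_condExp hm] at h
  exact h

theorem IsHKSeq.measurePreserving_snd (hν : IsHKSeq μ T ν) (k : ℕ) :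
    MeasurePreserving Prod.snd (ν (k + 1)) (ν k) := by
  have hm := MeasurableSpace.invariants_le (cubeMap T k)
  have := (hν.2 k).1
  have := (hν.2 (k + 1)).1
  refine MeasurePreserving.of_integral_comp_eq (μa := ν (k + 1)) measurable_snd fun F hF hFb => ?_
  have h := (hν.2 k).2 (fun _ => 1) F measurable_const hF ⟨1, by simp⟩ hFb
  simp only [condExp_const hm, one_mul, integral_condExp hm] at h
  exact h

theorem IsHKSeq.cubeFun_ae_eq (hν : IsHKSeq μ T ν) {f g : X → ℝ} (hfg : f =ᵐ[μ] g) :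
    ∀ k, cubeFun f k =ᵐ[ν k] cubeFun g k
  | 0 => hν.1 ▸ hfg
  | k + 1 =>
    ((hν.measurePreserving_fst k).quasiMeasurePreserving.ae_eq_comp (hν.cubeFun_ae_eq hfg k)).mul
      ((hν.measurePreserving_snd k).quasiMeasurePreserving.ae_eq_comp (hν.cubeFun_ae_eq hfg k))

theorem IsHKSeq.sq_integral_cubeFun_le (hν : IsHKSeq μ T ν) {f : X → ℝ} (hf : Measurable f)
    {R : ℝ} (hR : ∀ x, |f x| ≤ R) (k : ℕ) :
    (∫ x, cubeFun f k x ∂ν k) ^ 2 ≤ ∫ x, cubeFun f (k + 1) x ∂ν (k + 1) := by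
  have := (hν.2 k).1
  have hF := measurable_cubeFun hf k
  have hFb : ∃ C, ∀ x, |cubeFun f k x| ≤ C := ⟨_, abs_cubeFun_le hR k⟩
  refine (sq_integral_le_integral_condExp_mul_self (MeasurableSpace.invariants_le (cubeMap T k))
    (.of_bound hF.aestronglyMeasurable _ (.of_forall (abs_cubeFun_le hR k)))).trans_eq ?_
  exact ((hν.2 k).2 _ _ hF hF hFb hFb).symm

theorem IsHKSeq.pow_integral_le_integral_cubeFun (hν : IsHKSeq μ T ν) {f : X → ℝ}
    (hf : Measurable f) {R : ℝ} (hR : ∀ x, |f x| ≤ R) :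
    ∀ k, (∫ x, f x ∂μ) ^ 2 ^ (k + 1) ≤ ∫ x, cubeFun f (k + 1) x ∂ν (k + 1)
  | 0 => by
    have h0 := hν.sq_integral_cubeFun_le hf hR 0
    rw [hν.1] at h0
    exact h0
  | k + 1 => by
    have hnonneg : 0 ≤ (∫ x, f x ∂μ) ^ 2 ^ (k + 1) := by rw [pow_succ, pow_mul]; positivity
    calc (∫ x, f x ∂μ) ^ 2 ^ (k + 2) = ((∫ x, f x ∂μ) ^ 2 ^ (k + 1)) ^ 2 := by ring
      _ ≤ (∫ x, cubeFun f (k + 1) x ∂ν (k + 1)) ^ 2 :=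
        pow_le_pow_left₀ hnonneg (hν.pow_integral_le_integral_cubeFun hf hR k) 2
      _ ≤ _ := hν.sq_integral_cubeFun_le hf hR (k + 1)

theorem IsHKSeq.abs_integral_le_hkSeminorm (hν : IsHKSeq μ T ν) {f : X → ℝ} (hf : MemLp f ⊤ μ)
    (k : ℕ) : |∫ x, f x ∂μ| ≤ hkSeminorm ν (k + 1) f := by
  obtain ⟨g, hg, ⟨R, hR⟩, hfg⟩ := hf.exists_measurable_bounded_ae_eq
  have hpow := hν.pow_integral_le_integral_cubeFun hg hR k
  rw [← (Nat.even_pow.2 ⟨even_two, k.add_one_ne_zero⟩).pow_abs] at hpow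
  rw [hkSeminorm, integral_congr_ae (hν.cubeFun_ae_eq hfg _), integral_congr_ae hfg]
  calc |∫ x, g x ∂μ| = (|∫ x, g x ∂μ| ^ 2 ^ (k + 1)) ^ ((2 ^ (k + 1) : ℕ) : ℝ)⁻¹ :=
        (Real.pow_rpow_inv_natCast (abs_nonneg _) (by positivity)).symm
    _ ≤ _ := by
        rw [Nat.cast_pow, Nat.cast_ofNat, ← one_div]
        exact Real.rpow_le_rpow (by positivity) hpow (by positivity)

end Cube

/-- For a freely generated totally ergodic system and nonconstant (homogeneous) linear
maps `p_1, …, p_l : ℤ^d → ℤ`, the averages `(1/|Φ_N|) ∑_u T_1^{p_1(u)} ⋯ T_l^{p_l(u)} f`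
are asymptotically bounded in `L²(μ)` by `C ⦀f⦀₂`, where `⦀·⦀₂` is the Host–Kra
seminorm of order `2` (with respect to any ergodic product `T_1^{c_1} ⋯ T_l^{c_l}`,
on which it does not depend). -/
theorem linear_average_bounded_by_seminorm_two
    {X : Type*} [MeasurableSpace X] (μ : Measure X) [IsProbabilityMeasure μ]
    {l d : ℕ} (T : Fin l → Equiv.Perm X)
    (hmp : ∀ i, MeasurePreserving (⇑(T i)) μ μ)
    (hmp' : ∀ i, MeasurePreserving (⇑(T i)⁻¹) μ μ)
    (hcomm : ∀ i j, Commute (T i) (T j))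
    (herg : ∀ c : Fin l → ℤ, c ≠ 0 →
      Ergodic (⇑((List.ofFn fun j => T j ^ c j).prod)) μ)
    (a : Fin l → Fin d → ℤ) (ha : ∀ j, a j ≠ 0) :
    ∃ C : ℝ, ∀ f : X → ℝ, MemLp f ⊤ μ →
      ∀ Φ : ℕ → Finset (Fin d → ℤ), IsFolner Φ →
      ∀ c : Fin l → ℤ, c ≠ 0 →
      ∀ ν : ∀ k, Measure (Cube X k),
        IsHKSeq μ (⇑((List.ofFn fun j => T j ^ c j).prod)) ν →
        Filter.limsup
          (fun N => (eLpNorm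
            (fun x => ((Φ N).card : ℝ)⁻¹ * ∑ u ∈ Φ N,
              f (((List.ofFn fun j => T j ^ (∑ t, a j t * u t)).prod) x)) 2 μ).toReal)
          Filter.atTop
        ≤ C * hkSeminorm ν 2 f := by
  refine ⟨1, fun f hf Φ hΦ c hc ν hν => ?_⟩
  obtain ⟨j₀, -⟩ := Function.ne_iff.mp hc
  obtain ⟨t₀, ht₀⟩ := Function.ne_iff.mp (ha j₀)
  set S : (Fin d → ℤ) → X → X := fun u => ⇑(zpowProd T fun j => a j ⬝ᵥ u)
  have hS : ∀ u, MeasurePreserving (S u) μ μ := fun u =>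
    (zpowProd_mem (H := measurePreservingPerms μ) (fun j => ⟨hmp j, hmp' j⟩) _).1
  have hSadd : ∀ u v x, S (u + v) x = S u (S v x) := fun u v x => by
    simp only [S, dotProduct_add]
    exact congrArg (· x) (zpowProd_add hcomm (fun j => a j ⬝ᵥ u) (fun j => a j ⬝ᵥ v))
  have hSerg : Ergodic (S (Pi.single t₀ 1)) μ := by
    simp only [S, dotProduct_single, mul_one]
    exact herg (fun j => a j t₀) fun h => ht₀ (congrFun h j₀)
  rw [one_mul]
  exact (limsup_eLpNorm_folnerAverage_le hS hSadd hSerg (hf.mono_exponent le_top) hΦ).trans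
    (hν.abs_integral_le_hkSeminorm hf 1)
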